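/- Let m ≥ 1, and for 1 ≤ t ≤ m let a_t, b_t be positive integers with a_t·b_{t+1} − a_{t+1}·b_t ≥ 1 for all 1 ≤ t < m, let A_t be positive integers, and let ξ_{t,j} ∈ ℂ∖{0}. Consider f = ∏_{t=1}^m ∏_{j=1}^{r_t} (y^{a_t} + ξ_{t,j} x^{b_t})^{A_{t,j}} with A_t = Σ_j A_{t,j}. Then for each 1 ≤ i ≤ m, the minimum of a_i·u + b_i·v over the support of f equals a_i·Σ_{t≤i} b_t·A_t + b_i·Σ_{t>i} a_t·A_t. -/
import Mathlib


open MvPolynomial Finset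

/-- The weighted order of a polynomial in two variables with respect to
weights `(p, q)`: the minimum of `p * u + q * v` over the support. -/
noncomputable def weightedOrd (p q : ℕ) (f : MvPolynomial (Fin 2) ℂ) : ℕ :=
  sInf {n | ∃ d ∈ f.support, p * d 0 + q * d 1 = n}

/-- Auxiliary homomorphism sending `x ↦ C x * T^p`, `y ↦ C y * T^q`. -/
noncomputable def phiAux (p q : ℕ) : MvPolynomial (Fin 2) ℂ →+* Polynomial (MvPolynomial (Fin 2) ℂ) :=
  eval₂Hom (Polynomial.C.comp MvPolynomial.C)
    (fun j => Polynomial.C (MvPolynomial.X j) * Polynomial.X ^ (if j = 0 then p else q))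

lemma monomial_eq_two (d : Fin 2 →₀ ℕ) (c : ℂ) :
    (monomial d c : MvPolynomial (Fin 2) ℂ) = C c * X 0 ^ d 0 * X 1 ^ d 1 := by
  rw [monomial_eq, Finsupp.prod_pow, Fin.prod_univ_two, mul_assoc]

lemma phiAux_monomial (p q : ℕ) (d : Fin 2 →₀ ℕ) (c : ℂ) :
    phiAux p q (monomial d c)
      = Polynomial.C (monomial d c) * Polynomial.X ^ (p * d 0 + q * d 1) := by
  rw [monomial_eq_two]
  simp only [phiAux, map_mul, map_pow, eval₂Hom_C, RingHom.coe_comp, Function.comp_apply,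
    eval₂Hom_X', if_pos]
  norm_num
  ring

lemma coeff_phiAux (p q : ℕ) (f : MvPolynomial (Fin 2) ℂ) (n : ℕ) :
    (phiAux p q f).coeff n
      = ∑ d ∈ f.support.filter (fun d => p * d 0 + q * d 1 = n),
          monomial d (coeff d f) := by
  conv_lhs => rw [f.as_sum, map_sum]
  rw [Polynomial.finset_sum_coeff, Finset.sum_filter]
  refine sum_congr rfl fun d _ => ?_
  rw [phiAux_monomial, Polynomial.coeff_C_mul, Polynomial.coeff_X_pow]
  by_cases h : p * d 0 + q * d 1 = n
  · simp [h]
  · simp [h]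
    exact fun hn => absurd hn.symm h

lemma coeff_phiAux_ne_zero_iff (p q : ℕ) (f : MvPolynomial (Fin 2) ℂ) (n : ℕ) :
    (phiAux p q f).coeff n ≠ 0 ↔ ∃ d ∈ f.support, p * d 0 + q * d 1 = n := by
  rw [coeff_phiAux]
  constructor
  · intro h
    by_contra hc
    push_neg at hc
    exact h (by rw [Finset.filter_false_of_mem (fun d hd => hc d hd), Finset.sum_empty])
  · rintro ⟨d, hd, hw⟩
    intro h0
    have h1 := congrArg (MvPolynomial.coeff d) h0
    rw [MvPolynomial.coeff_sum, Finset.sum_eq_single d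
      (fun e _ hne => by rw [coeff_monomial, if_neg hne])
      (fun hnd => absurd (Finset.mem_filter.mpr ⟨hd, hw⟩) hnd)] at h1
    rw [coeff_monomial, if_pos rfl] at h1
    exact (mem_support_iff.mp hd) h1

lemma phiAux_ne_zero {p q : ℕ} {f : MvPolynomial (Fin 2) ℂ} (hf : f ≠ 0) : phiAux p q f ≠ 0 := by
  obtain ⟨d, hd⟩ := MvPolynomial.ne_zero_iff.mp hf
  intro h0
  have := (coeff_phiAux_ne_zero_iff p q f (p * d 0 + q * d 1)).mpr
    ⟨d, mem_support_iff.mpr hd, rfl⟩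
  rw [h0] at this
  simp at this

lemma weightedOrd_eq {p q : ℕ} {f : MvPolynomial (Fin 2) ℂ} (hf : f ≠ 0) :
    weightedOrd p q f = (phiAux p q f).natTrailingDegree := by
  have hS : {n | ∃ d ∈ f.support, p * d 0 + q * d 1 = n}
      = {n | (phiAux p q f).coeff n ≠ 0} := by
    ext n; exact (coeff_phiAux_ne_zero_iff p q f n).symm
  unfold weightedOrd
  rw [hS]
  refine le_antisymm (Nat.sInf_le ?_) ?_
  · exact Polynomial.coeff_natTrailingDegree_ne_zero.mpr (phiAux_ne_zero hf)
  · have hne : {n | (phiAux p q f).coeff n ≠ 0}.Nonempty :=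
      ⟨_, Polynomial.coeff_natTrailingDegree_ne_zero.mpr (phiAux_ne_zero hf)⟩
    exact Polynomial.natTrailingDegree_le_of_ne_zero (Nat.sInf_mem hne)

lemma weightedOrd_one (p q : ℕ) : weightedOrd p q 1 = 0 := by
  rw [weightedOrd_eq one_ne_zero, map_one, Polynomial.natTrailingDegree_one]

lemma weightedOrd_mul {p q : ℕ} {f g : MvPolynomial (Fin 2) ℂ} (hf : f ≠ 0) (hg : g ≠ 0) :
    weightedOrd p q (f * g) = weightedOrd p q f + weightedOrd p q g := by
  rw [weightedOrd_eq (mul_ne_zero hf hg), map_mul,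
    Polynomial.natTrailingDegree_mul (phiAux_ne_zero hf) (phiAux_ne_zero hg),
    weightedOrd_eq hf, weightedOrd_eq hg]

lemma weightedOrd_prod {p q : ℕ} {ι : Type*} (s : Finset ι) (F : ι → MvPolynomial (Fin 2) ℂ)
    (h : ∀ t ∈ s, F t ≠ 0) :
    weightedOrd p q (∏ t ∈ s, F t) = ∑ t ∈ s, weightedOrd p q (F t) := by
  induction s using Finset.cons_induction with
  | empty => simpa using weightedOrd_one p q
  | cons t s hts ih =>
    rw [Finset.prod_cons, Finset.sum_cons,
      weightedOrd_mul (h t (mem_cons_self t s))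
        (prod_ne_zero_iff.mpr fun u hu => h u (mem_cons.mpr (Or.inr hu))),
      ih fun u hu => h u (mem_cons.mpr (Or.inr hu))]

lemma weightedOrd_pow {p q : ℕ} {f : MvPolynomial (Fin 2) ℂ} (hf : f ≠ 0) (A : ℕ) :
    weightedOrd p q (f ^ A) = A * weightedOrd p q f := by
  induction A with
  | zero => simpa using weightedOrd_one p q
  | succ A ih => rw [pow_succ, weightedOrd_mul (pow_ne_zero A hf) hf, ih]; ring

lemma factor_repr (aa bb : ℕ) (c : ℂ) :
    (X 1 ^ aa + C c * X 0 ^ bb : MvPolynomial (Fin 2) ℂ)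
      = monomial (Finsupp.single 1 aa) 1 + monomial (Finsupp.single 0 bb) c := by
  rw [X_pow_eq_monomial, C_mul_X_pow_eq_monomial]

lemma single_ne (aa bb : ℕ) (ha : 0 < aa) :
    (Finsupp.single (1 : Fin 2) aa) ≠ Finsupp.single 0 bb := by
  intro h
  have := DFunLike.congr_fun h 1
  simp [Finsupp.single_apply] at this
  exact ha.ne' this

lemma factor_ne_zero (aa bb : ℕ) (ha : 0 < aa) (c : ℂ) :
    (X 1 ^ aa + C c * X 0 ^ bb : MvPolynomial (Fin 2) ℂ) ≠ 0 := by
  intro h0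
  have h1 : coeff (Finsupp.single 1 aa)
      (X 1 ^ aa + C c * X 0 ^ bb : MvPolynomial (Fin 2) ℂ) = 1 := by
    rw [factor_repr, coeff_add, coeff_monomial, coeff_monomial, if_pos rfl,
      if_neg (Ne.symm (single_ne aa bb ha)), add_zero]
  rw [h0] at h1
  simp at h1

lemma weightedOrd_factor (p q aa bb : ℕ) (ha : 0 < aa) (c : ℂ) (hc : c ≠ 0) :
    weightedOrd p q (X 1 ^ aa + C c * X 0 ^ bb) = min (q * aa) (p * bb) := by
  set g : MvPolynomial (Fin 2) ℂ := X 1 ^ aa + C c * X 0 ^ bb with hg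
  have hne := single_ne aa bb ha
  have h1 : coeff (Finsupp.single 1 aa) g = 1 := by
    rw [hg, factor_repr, coeff_add, coeff_monomial, coeff_monomial, if_pos rfl,
      if_neg (Ne.symm hne), add_zero]
  have h2 : coeff (Finsupp.single 0 bb) g = c := by
    rw [hg, factor_repr, coeff_add, coeff_monomial, coeff_monomial, if_pos rfl,
      if_neg hne, zero_add]
  have hw1 : p * (Finsupp.single (1 : Fin 2) aa) 0 + q * (Finsupp.single (1 : Fin 2) aa) 1
      = q * aa := by simp [Finsupp.single_apply]
  have hw2 : p * (Finsupp.single (0 : Fin 2) bb) 0 + q * (Finsupp.single (0 : Fin 2) bb) 1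
      = p * bb := by simp [Finsupp.single_apply]
  have hsub : g.support ⊆ {Finsupp.single 1 aa, Finsupp.single 0 bb} := by
    rw [hg, factor_repr]
    refine (support_add).trans ?_
    intro d hd
    rcases Finset.mem_union.mp hd with h | h
    · exact Finset.mem_insert.mpr (Or.inl (by
        classical
        have := support_monomial_subset h
        simpa using this))
    · exact Finset.mem_insert.mpr (Or.inr (by
        classical
        have := support_monomial_subset h
        simpa using this))
  unfold weightedOrd
  refine le_antisymm (Nat.sInf_le ?_) (le_csInf ?_ ?_)
  · rcases le_total (q * aa) (p * bb) with h | h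
    · rw [min_eq_left h]
      exact ⟨Finsupp.single 1 aa, mem_support_iff.mpr (by rw [h1]; exact one_ne_zero), hw1⟩
    · rw [min_eq_right h]
      exact ⟨Finsupp.single 0 bb, mem_support_iff.mpr (by rw [h2]; exact hc), hw2⟩
  · exact ⟨q * aa, Finsupp.single 1 aa,
      mem_support_iff.mpr (by rw [h1]; exact one_ne_zero), hw1⟩
  · rintro n ⟨d, hd, rfl⟩
    rcases Finset.mem_insert.mp (hsub hd) with h | h
    · subst h; rw [hw1]; exact min_le_left _ _
    · rw [Finset.mem_singleton.mp h, hw2]; exact min_le_right _ _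

lemma chain_ineq (m : ℕ) (a b : ℕ → ℕ)
    (hpos : ∀ t, 1 ≤ t → t ≤ m → 0 < a t ∧ 0 < b t)
    (hdet : ∀ t, 1 ≤ t → t < m → a (t + 1) * b t + 1 ≤ a t * b (t + 1)) :
    ∀ t s, 1 ≤ t → t ≤ s → s ≤ m → a s * b t ≤ a t * b s := by
  intro t s ht hts
  induction s, hts using Nat.le_induction with
  | base => intro _; exact le_refl _
  | succ s hs ih =>
    intro hsm
    have hsm' : s ≤ m := Nat.le_of_succ_le hsm
    have h1 := ih hsm'
    have h2 : a (s + 1) * b s + 1 ≤ a s * b (s + 1) := hdet s (ht.trans hs) hsm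
    have hbs : 0 < b s := (hpos s (ht.trans hs) hsm').2
    have key : a (s + 1) * b t * b s ≤ a t * b (s + 1) * b s := by nlinarith
    exact Nat.le_of_mul_le_mul_right key hbs

/-- Multiplicity formula (2.4): for
`f = ∏_{t=1}^m ∏_{j=1}^{r_t} (y^{a_t} + ξ_{t,j} x^{b_t})^{A_{t,j}}`, the
minimum of `a_i*u + b_i*v` over the support of `f` equals
`a_i * Σ_{t ≤ i} b_t A_t + b_i * Σ_{t > i} a_t A_t`, where `A_t = Σ_j A_{t,j}`. -/
theorem stmt4 (m : ℕ) (hm : 1 ≤ m) (a b r : ℕ → ℕ) (A : ℕ → ℕ → ℕ) (ξ : ℕ → ℕ → ℂ)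
    (hpos : ∀ t, 1 ≤ t → t ≤ m → 0 < a t ∧ 0 < b t)
    (hdet : ∀ t, 1 ≤ t → t < m → a (t + 1) * b t + 1 ≤ a t * b (t + 1))
    (hA : ∀ t, 1 ≤ t → t ≤ m → ∀ j, 1 ≤ j → j ≤ r t → 0 < A t j)
    (hξ : ∀ t, 1 ≤ t → t ≤ m → ∀ j, 1 ≤ j → j ≤ r t → ξ t j ≠ 0)
    (i : ℕ) (hi1 : 1 ≤ i) (him : i ≤ m) :
    weightedOrd (a i) (b i)
      (∏ t ∈ Icc 1 m, ∏ j ∈ Icc 1 (r t), (X 1 ^ a t + C (ξ t j) * X 0 ^ b t) ^ A t j)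
    = a i * (∑ t ∈ Icc 1 i, b t * ∑ j ∈ Icc 1 (r t), A t j)
      + b i * (∑ t ∈ Icc (i + 1) m, a t * ∑ j ∈ Icc 1 (r t), A t j) := by
  have hfac : ∀ t ∈ Icc 1 m, ∀ j : ℕ,
      (X 1 ^ a t + C (ξ t j) * X 0 ^ b t : MvPolynomial (Fin 2) ℂ) ≠ 0 := by
    intro t ht j
    exact factor_ne_zero _ _ (hpos t (mem_Icc.mp ht).1 (mem_Icc.mp ht).2).1 _
  rw [weightedOrd_prod _ _ (fun t ht => prod_ne_zero_iff.mpr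
    fun j _ => pow_ne_zero _ (hfac t ht j))]
  have step : ∀ t ∈ Icc 1 m,
      (weightedOrd (a i) (b i)
        (∏ j ∈ Icc 1 (r t), (X 1 ^ a t + C (ξ t j) * X 0 ^ b t) ^ A t j))
      = (∑ j ∈ Icc 1 (r t), A t j) * min (b i * a t) (a i * b t) := by
    intro t ht
    obtain ⟨ht1, ht2⟩ := mem_Icc.mp ht
    rw [weightedOrd_prod _ _ (fun j _ => pow_ne_zero _ (hfac t ht j)), Finset.sum_mul]
    refine sum_congr rfl fun j hj => ?_
    obtain ⟨hj1, hj2⟩ := mem_Icc.mp hj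
    rw [weightedOrd_pow (hfac t ht j),
      weightedOrd_factor _ _ _ _ (hpos t ht1 ht2).1 _ (hξ t ht1 ht2 j hj1 hj2)]
  rw [Finset.sum_congr rfl step]
  have hchain := chain_ineq m a b hpos hdet
  have hsplit : Icc 1 m = Icc 1 i ∪ Icc (i + 1) m := by
    ext x; simp only [mem_Icc, mem_union]; omega
  have hdisj : Disjoint (Icc 1 i) (Icc (i + 1) m) := by
    simp only [Finset.disjoint_left, mem_Icc]; omega
  rw [hsplit, Finset.sum_union hdisj]
  have e1 : ∀ t ∈ Icc 1 i,
      (∑ j ∈ Icc 1 (r t), A t j) * min (b i * a t) (a i * b t)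
      = a i * (b t * ∑ j ∈ Icc 1 (r t), A t j) := by
    intro t ht
    obtain ⟨ht1, ht2⟩ := mem_Icc.mp ht
    rw [min_eq_right (by rw [mul_comm (b i) (a t)]; exact hchain t i ht1 ht2 him)]
    ring
  have e2 : ∀ t ∈ Icc (i + 1) m,
      (∑ j ∈ Icc 1 (r t), A t j) * min (b i * a t) (a i * b t)
      = b i * (a t * ∑ j ∈ Icc 1 (r t), A t j) := by
    intro t ht
    obtain ⟨ht1, ht2⟩ := mem_Icc.mp ht
    rw [min_eq_left (by rw [mul_comm (b i) (a t)]; exact hchain i t hi1 (by omega) ht2)]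
    ring
  rw [Finset.sum_congr rfl e1, Finset.sum_congr rfl e2, ← Finset.mul_sum, ← Finset.mul_sum]
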